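/- arXiv:1501.01507 — 3 statements merged into one kernel-verified Lean document; each statement's English description precedes it below -/
import Mathlib

section
/- Let I be a normal Riesz γ-ideal in a GPEA P, ∼ := ∼_I, and let U be the γ-unitization of P. Then ∼* is a Riesz congruence on U iff ∼ satisfies condition (GCR): a ∼ b implies there exist i, j ∈ I with i ⊕ a = j ⊕ b (equivalently, there exist k, ℓ ∈ I with a ⊕ k = b ⊕ ℓ). -/
open scoped Classical

/-- A generalized pseudo effect algebra: partial orthosummation modeled via `Option`. -/
structure GPEA (P : Type*) where
  oplus : P → P → Option P
  zero : P
  assoc₁ : ∀ {a b c ab s : P}, oplus a b = some ab → oplus ab c = some s →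
    ∃ bc, oplus b c = some bc ∧ oplus a bc = some s
  assoc₂ : ∀ {a b c bc s : P}, oplus b c = some bc → oplus a bc = some s →
    ∃ ab, oplus a b = some ab ∧ oplus ab c = some s
  conj : ∀ {a b s : P}, oplus a b = some s →
    (∃ c, oplus c a = some s) ∧ (∃ d, oplus b d = some s)
  cancel_right : ∀ {a b c s : P}, oplus a c = some s → oplus b c = some s → a = b
  cancel_left : ∀ {a b c s : P}, oplus c a = some s → oplus c b = some s → a = b
  oplus_zero : ∀ a : P, oplus a zero = some a
  zero_oplus : ∀ a : P, oplus zero a = some a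
  pos : ∀ {a b : P}, oplus a b = some zero → a = zero ∧ b = zero

namespace GPEA

variable {P Q : Type*}

/-- `a ≤ b` iff there is `c` with `a ⊕ c = b`. -/
def le (G : GPEA P) (a b : P) : Prop := ∃ c, G.oplus a c = some b

/-- `a ≤ b` (left version) iff there is `d` with `d ⊕ a = b`. -/
def leL (G : GPEA P) (a b : P) : Prop := ∃ d, G.oplus d a = some b

/-- An ideal: a nonempty, downward closed subset closed under existing orthosums. -/
def IsIdeal (G : GPEA P) (I : Set P) : Prop :=
  I.Nonempty ∧ (∀ a ∈ I, ∀ b : P, G.le b a → b ∈ I) ∧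
    (∀ a ∈ I, ∀ b ∈ I, ∀ s : P, G.oplus a b = some s → s ∈ I)

/-- A normal ideal: `a ⊕ c = c ⊕ b` implies `a ∈ I ↔ b ∈ I`. -/
def IsNormalIdeal (G : GPEA P) (I : Set P) : Prop :=
  G.IsIdeal I ∧ ∀ a b c s : P, G.oplus a c = some s → G.oplus c b = some s → (a ∈ I ↔ b ∈ I)

/-- Condition (R1) for an ideal. -/
def R1 (G : GPEA P) (I : Set P) : Prop :=
  ∀ i ∈ I, ∀ a b s : P, G.oplus a b = some s → G.le i s →
    ∃ j ∈ I, ∃ k ∈ I, G.le j a ∧ G.le k b ∧ ∃ t, G.oplus j k = some t ∧ G.le i t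

/-- Condition (R2) for an ideal. -/
def R2 (G : GPEA P) (I : Set P) : Prop :=
  ∀ i ∈ I, ∀ a : P, G.le i a →
    (∀ b x s : P, G.oplus x i = some a → G.oplus x b = some s →
      ∃ j ∈ I, G.le j b ∧ ∀ c, G.oplus j c = some b → ∃ t, G.oplus a c = some t) ∧
    (∀ b y s : P, G.oplus i y = some a → G.oplus b y = some s →
      ∃ k ∈ I, G.le k b ∧ ∀ z, G.oplus z k = some b → ∃ t, G.oplus z a = some t)

/-- A Riesz ideal is an ideal satisfying (R1) and (R2). -/
def IsRieszIdeal (G : GPEA P) (I : Set P) : Prop := G.IsIdeal I ∧ G.R1 I ∧ G.R2 I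

/-- A normal Riesz ideal. -/
def IsNormalRieszIdeal (G : GPEA P) (I : Set P) : Prop := G.IsNormalIdeal I ∧ G.R1 I ∧ G.R2 I

/-- A GPEA-morphism. -/
def IsMorphism (G : GPEA P) (H : GPEA Q) (φ : P → Q) : Prop :=
  ∀ a b s : P, G.oplus a b = some s → H.oplus (φ a) (φ b) = some (φ s)

/-- A unitizing GPEA-automorphism: a GPEA-automorphism `γ` such that
`γa ⊕ b` is defined iff `b ⊕ a` is defined. -/
def IsUnitizing (G : GPEA P) (γ : P → P) : Prop :=
  Function.Bijective γ ∧ G.IsMorphism G γ ∧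
    (∀ a b : P, (∃ s, G.oplus (γ a) (γ b) = some s) → ∃ t, G.oplus a b = some t) ∧
    (∀ a b : P, (∃ s, G.oplus (γ a) b = some s) ↔ ∃ t, G.oplus b a = some t)

/-- A weak congruence. -/
def IsWeakCong (G : GPEA P) (r : P → P → Prop) : Prop :=
  Equivalence r ∧ ∀ a b a₁ b₁ s s₁ : P, G.oplus a b = some s → G.oplus a₁ b₁ = some s₁ →
    r a a₁ → r b b₁ → r s s₁

/-- Condition (C3): a weak congruence satisfying it is a congruence. -/
def C3 (G : GPEA P) (r : P → P → Prop) : Prop :=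
  ∀ a b s : P, G.oplus a b = some s →
    (∀ a₁, r a a₁ → ∃ b₁, r b b₁ ∧ ∃ t, G.oplus a₁ b₁ = some t) ∧
    (∀ b₂, r b b₂ → ∃ a₂, r a a₂ ∧ ∃ t, G.oplus a₂ b₂ = some t)

/-- Condition (C4). -/
def C4 (G : GPEA P) (r : P → P → Prop) : Prop :=
  ∀ a b a₁ b₁ s t : P, r a b →
    ((G.oplus a a₁ = some s ∧ G.oplus b b₁ = some t ∧ r s t) ∨
      (G.oplus a₁ a = some s ∧ G.oplus b₁ b = some t ∧ r s t)) → r a₁ b₁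

/-- Condition (C5'). -/
def C5' (G : GPEA P) (r : P → P → Prop) : Prop :=
  ∀ a b c s : P, G.oplus b c = some s → r a s →
    ∃ a₁ a₂, r a₁ b ∧ r a₂ c ∧ G.oplus a₁ a₂ = some a

/-- Condition (CR): here `a \ c` is the unique `x` with `x ⊕ c = a`. -/
def CR (G : GPEA P) (r : P → P → Prop) : Prop :=
  ∀ a b : P, r a b → ∃ c d : P,
    G.le c a ∧ G.le a d ∧ G.le c b ∧ G.le b d ∧
    (∀ x, G.oplus x c = some a → r x G.zero) ∧
    (∀ x, G.oplus x c = some b → r x G.zero) ∧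
    (∀ x, G.oplus x a = some d → r x G.zero) ∧
    (∀ x, G.oplus x b = some d → r x G.zero)

/-- A Riesz congruence: a congruence satisfying (C4), (C5') and (CR). -/
def IsRieszCong (G : GPEA P) (r : P → P → Prop) : Prop :=
  G.IsWeakCong r ∧ G.C3 r ∧ G.C4 r ∧ G.C5' r ∧ G.CR r

/-- The relation `∼_I` induced by an ideal `I`: `a ∼_I b` iff there are
`i, j ∈ I` with `i ≤ a`, `j ≤ b` and `a \ i = b \ j`. -/
def simI (G : GPEA P) (I : Set P) (a b : P) : Prop :=
  ∃ i ∈ I, ∃ j ∈ I, ∃ d : P, G.oplus d i = some a ∧ G.oplus d j = some b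

/-- Condition (GCR) for the relation `∼_I`. -/
def GCR (G : GPEA P) (I : Set P) : Prop :=
  ∀ a b : P, G.simI I a b → ∃ i ∈ I, ∃ j ∈ I, ∃ s, G.oplus i a = some s ∧ G.oplus j b = some s

/-- The Riesz decomposition property. -/
def RDP (G : GPEA P) : Prop :=
  ∀ a b c d s : P, G.oplus a b = some s → G.oplus c d = some s →
    ∃ e₁₁ e₁₂ e₂₁ e₂₂ : P, G.oplus e₁₁ e₁₂ = some a ∧ G.oplus e₂₁ e₂₂ = some b ∧
      G.oplus e₁₁ e₂₁ = some c ∧ G.oplus e₁₂ e₂₂ = some d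

end GPEA

/-- A pseudo effect algebra: a GPEA with a largest element `1`. -/
structure PEA (P : Type*) extends GPEA P where
  one : P
  le_one : ∀ a : P, ∃ c, oplus a c = some one
  le_one' : ∀ a : P, ∃ d, oplus d a = some one

namespace PEA

variable {P : Type*}

/-- The right supplement `a˜`: the unique element with `a ⊕ a˜ = 1`. -/
noncomputable def rsup (U : PEA P) (a : P) : P := Classical.choose (U.le_one a)

/-- The left supplement `a⁻`: the unique element with `a⁻ ⊕ a = 1`. -/
noncomputable def lsup (U : PEA P) (a : P) : P := Classical.choose (U.le_one' a)

/-- A state on a PEA. -/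
def IsState (U : PEA P) (s : P → ℝ) : Prop :=
  (∀ a : P, 0 ≤ s a ∧ s a ≤ 1) ∧ s U.one = 1 ∧
    ∀ a b c : P, U.oplus a b = some c → s c = s a + s b

end PEA

/-- `U` is a binary unitization of the GPEA `G` via the embedding `ι`. -/
def IsBinaryUnitization {P Q : Type*} (G : GPEA P) (U : PEA Q) (ι : P → Q) : Prop :=
  Function.Injective ι ∧ ι G.zero = U.toGPEA.zero ∧
    (∀ a b : P, U.oplus (ι a) (ι b) = (G.oplus a b).map ι) ∧
    (∀ a : P, U.one ≠ ι a) ∧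
    (∀ x y : Q, x ∉ Set.range ι → y ∉ Set.range ι → U.oplus x y = none)

/-- The orthosummation of the `γ`-unitization on `P ⊕ P`
(`Sum.inl a` is `a ∈ P`, `Sum.inr b` is `ηb`). -/
noncomputable def uop {P : Type*} (G : GPEA P) (γ : P → P) :
    P ⊕ P → P ⊕ P → Option (P ⊕ P)
  | .inl a, .inl b => (G.oplus a b).map .inl
  | .inl a, .inr b => if h : G.leL a b then some (.inr (Classical.choose h)) else none
  | .inr a, .inl b => if h : G.le (γ b) a then some (.inr (Classical.choose h)) else none
  | .inr _, .inr _ => none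

/-- A PEA-isomorphism. -/
def IsPEAIso {A B : Type*} (U : PEA A) (V : PEA B) (φ : A → B) : Prop :=
  Function.Bijective φ ∧
    (∀ a b s : A, U.oplus a b = some s → V.oplus (φ a) (φ b) = some (φ s)) ∧
    (∀ a b : A, (∃ s, V.oplus (φ a) (φ b) = some s) → ∃ t, U.oplus a b = some t) ∧
    φ U.one = V.one

/-- The coordinatewise orthosummation on `I → P`. -/
noncomputable def piOplus {P : Type*} {I : Type*} (G : GPEA P) (f g : I → P) :
    Option (I → P) :=
  if h : ∀ i, ∃ s, G.oplus (f i) (g i) = some s then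
    some (fun i => Classical.choose (h i)) else none

/-- The extension `∼*` of a relation on `P` to `P ⊕ P`. -/
def rstar {P : Type*} (r : P → P → Prop) : P ⊕ P → P ⊕ P → Prop
  | .inl a, .inl b => r a b
  | .inr a, .inr b => r a b
  | _, _ => False

/-!
Under normality and (R1), `a ∼_I b` holds as soon as `i ⊕ a = j ⊕ b` for some `i, j ∈ I`, and
(GCR) is the converse. With (GCR), `∼_I` cancels common summands (C4), while (R1) and (R2) supply
(C3) and (C5'). A sum in the unitization that involves some `ηy` is a difference in `P`
(`a ⊕ ηy = ηw` iff `w ⊕ a = y`, and `ηy ⊕ b = ηv` iff `γb ⊕ v = y`), so each condition for `∼*`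
reduces to one of these properties of `∼_I`, transported by `γ` where needed. Conversely, (CR) for
`∼*` at `a ∼_I b` yields a common upper bound `d ∈ P` of `a` and `b` whose differences
`d \ a`, `d \ b` lie in `I`, which is (GCR).
-/

namespace GPEA

variable {P : Type*} {G : GPEA P} {I : Set P} {a b c d s t i j : P}

theorem IsIdeal.mem_of_le (hI : G.IsIdeal I) (ha : a ∈ I) (h : G.le b a) : b ∈ I :=
  hI.2.1 a ha b h

theorem IsIdeal.mem_of_oplus_right (hI : G.IsIdeal I) (h : G.oplus a b = some s) (hs : s ∈ I) :
    b ∈ I :=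
  hI.mem_of_le hs (G.conj h).2

theorem IsIdeal.zero_mem (hI : G.IsIdeal I) : G.zero ∈ I :=
  let ⟨a, ha⟩ := hI.1
  hI.mem_of_le ha ⟨a, G.zero_oplus a⟩

theorem IsIdeal.oplus_mem (hI : G.IsIdeal I) (ha : a ∈ I) (hb : b ∈ I)
    (h : G.oplus a b = some s) : s ∈ I :=
  hI.2.2 a ha b hb s h

theorem IsNormalIdeal.exists_oplus_of_mem_oplus (hN : G.IsNormalIdeal I) (hi : i ∈ I)
    (h : G.oplus i d = some a) : ∃ j ∈ I, G.oplus d j = some a :=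
  let ⟨j, hj⟩ := (G.conj h).2
  ⟨j, (hN.2 i j d a h hj).mp hi, hj⟩

theorem IsNormalIdeal.exists_oplus_of_oplus_mem (hN : G.IsNormalIdeal I) (hi : i ∈ I)
    (h : G.oplus d i = some a) : ∃ j ∈ I, G.oplus j d = some a :=
  let ⟨j, hj⟩ := (G.conj h).1
  ⟨j, (hN.2 j i d a hj h).mpr hi, hj⟩

theorem simI_refl (hI : G.IsIdeal I) (a : P) : G.simI I a a :=
  ⟨G.zero, hI.zero_mem, G.zero, hI.zero_mem, a, G.oplus_zero a, G.oplus_zero a⟩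

theorem simI_symm (h : G.simI I a b) : G.simI I b a :=
  let ⟨i, hi, j, hj, d, hda, hdb⟩ := h
  ⟨j, hj, i, hi, d, hdb, hda⟩

theorem simI_zero_of_mem (hI : G.IsIdeal I) (ha : a ∈ I) : G.simI I a G.zero :=
  ⟨a, ha, G.zero, hI.zero_mem, G.zero, G.zero_oplus a, G.zero_oplus G.zero⟩

theorem mem_of_simI_zero (h : G.simI I a G.zero) : a ∈ I := by
  obtain ⟨i, hi, j, -, d, hda, hd⟩ := h
  obtain rfl := (G.pos hd).1
  rwa [Option.some.inj ((G.zero_oplus i).symm.trans hda)] at hi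

theorem simI_of_oplus_mem (hI : G.IsIdeal I) (hi : i ∈ I) (h : G.oplus a i = some s) :
    G.simI I s a :=
  ⟨i, hi, G.zero, hI.zero_mem, a, h, G.oplus_zero a⟩

theorem simI_of_mem_oplus_mem_oplus (hN : G.IsNormalIdeal I) (hi : i ∈ I) (hj : j ∈ I)
    (ha : G.oplus i d = some a) (hb : G.oplus j d = some b) : G.simI I a b :=
  let ⟨i', hi', hda⟩ := hN.exists_oplus_of_mem_oplus hi ha
  let ⟨j', hj', hdb⟩ := hN.exists_oplus_of_mem_oplus hj hb
  ⟨i', hi', j', hj', d, hda, hdb⟩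

theorem simI_of_mem_oplus (hN : G.IsNormalIdeal I) (hi : i ∈ I) (h : G.oplus i a = some s) :
    G.simI I s a :=
  simI_of_mem_oplus_mem_oplus hN hi hN.1.zero_mem h (G.zero_oplus a)

theorem exists_mem_oplus_of_simI (hN : G.IsNormalIdeal I) (h : G.simI I a b) :
    ∃ i ∈ I, ∃ j ∈ I, ∃ d, G.oplus i d = some a ∧ G.oplus j d = some b := by
  obtain ⟨i, hi, j, hj, d, hda, hdb⟩ := h
  obtain ⟨i', hi', hda'⟩ := hN.exists_oplus_of_oplus_mem hi hda
  obtain ⟨j', hj', hdb'⟩ := hN.exists_oplus_of_oplus_mem hj hdb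
  exact ⟨i', hi', j', hj', d, hda', hdb'⟩

/-- (R1) lets one peel the ideal parts off two decompositions `i ⊕ a = j ⊕ b` of the same
element down to a common remainder. -/
theorem simI_of_mem_oplus_eq (hN : G.IsNormalIdeal I) (hR1 : G.R1 I) (hi : i ∈ I) (hj : j ∈ I)
    (ha : G.oplus i a = some s) (hb : G.oplus j b = some s) : G.simI I a b := by
  obtain ⟨k, hk, l, hl, ⟨i₂, hki₂⟩, ⟨u, hlu⟩, t, hklt, r, hjr⟩ := hR1 j hj i a s ha ⟨b, hb⟩
  obtain ⟨w, hwu, hiw⟩ := G.assoc₂ hlu ha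
  obtain ⟨z, hi₂z, hkz⟩ := G.assoc₁ hki₂ hwu
  obtain ⟨m, hm, hlm⟩ := hN.exists_oplus_of_mem_oplus (hN.1.mem_of_oplus_right hki₂ hi) hi₂z
  obtain ⟨t', hklt', ht'm⟩ := G.assoc₂ hlm hkz
  obtain rfl : t' = t := Option.some.inj (hklt'.symm.trans hklt)
  obtain ⟨n, hrm, hjn⟩ := G.assoc₁ hjr ht'm
  obtain ⟨b', hnu, hjb'⟩ := G.assoc₁ hjn hiw
  obtain rfl : b = b' := G.cancel_left hb hjb'
  have hr : r ∈ I := hN.1.mem_of_oplus_right hjr (hN.1.oplus_mem hk hl hklt)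
  exact simI_of_mem_oplus_mem_oplus hN hl (hN.1.oplus_mem hr hm hrm) hlu hnu

theorem simI_of_oplus_mem_eq (hN : G.IsNormalIdeal I) (hR1 : G.R1 I) (hi : i ∈ I) (hj : j ∈ I)
    (ha : G.oplus a i = some s) (hb : G.oplus b j = some s) : G.simI I a b := by
  obtain ⟨i', hi', ha'⟩ := hN.exists_oplus_of_oplus_mem hi ha
  obtain ⟨j', hj', hb'⟩ := hN.exists_oplus_of_oplus_mem hj hb
  exact simI_of_mem_oplus_eq hN hR1 hi' hj' ha' hb'

theorem simI_trans (hN : G.IsNormalIdeal I) (hR1 : G.R1 I) (hab : G.simI I a b)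
    (hbc : G.simI I b c) : G.simI I a c := by
  obtain ⟨i, hi, j, hj, d, hda, hdb⟩ := hab
  obtain ⟨k, hk, l, hl, e, heb, hec⟩ := hbc
  obtain ⟨m, hm, n, hn, x, hxd, hxe⟩ := simI_of_oplus_mem_eq hN hR1 hj hk hdb heb
  obtain ⟨y, hmi, hxa⟩ := G.assoc₁ hxd hda
  obtain ⟨z, hnl, hxc⟩ := G.assoc₁ hxe hec
  exact ⟨y, hN.1.oplus_mem hm hi hmi, z, hN.1.oplus_mem hn hl hnl, x, hxa, hxc⟩

theorem simI_equivalence (hN : G.IsNormalIdeal I) (hR1 : G.R1 I) : Equivalence (G.simI I) :=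
  ⟨simI_refl hN.1, simI_symm, simI_trans hN hR1⟩

theorem IsNormalIdeal.exists_oplus_oplus_mem (hN : G.IsNormalIdeal I) {e : P} (hi : i ∈ I)
    (hj : j ∈ I) (hda : G.oplus d i = some a) (heb : G.oplus e j = some b)
    (h : G.oplus a b = some s) : ∃ f, G.oplus d e = some f ∧ ∃ k ∈ I, G.oplus f k = some s := by
  obtain ⟨x, hib, hdx⟩ := G.assoc₁ hda h
  obtain ⟨y, hie, hyj⟩ := G.assoc₂ heb hib
  obtain ⟨k, hk, hek⟩ := hN.exists_oplus_of_mem_oplus hi hie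
  obtain ⟨z, hkj, hez⟩ := G.assoc₁ hek hyj
  obtain ⟨f, hde, hfz⟩ := G.assoc₂ hez hdx
  exact ⟨f, hde, z, hN.1.oplus_mem hk hj hkj, hfz⟩

theorem simI_oplus (hN : G.IsNormalIdeal I) {a₁ b₁ s₁ : P} (h : G.oplus a b = some s)
    (h₁ : G.oplus a₁ b₁ = some s₁) (ha : G.simI I a a₁) (hb : G.simI I b b₁) :
    G.simI I s s₁ := by
  obtain ⟨i, hi, i₁, hi₁, d, hda, hda₁⟩ := ha
  obtain ⟨j, hj, j₁, hj₁, e, heb, heb₁⟩ := hb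
  obtain ⟨f, hde, k, hk, hfk⟩ := hN.exists_oplus_oplus_mem hi hj hda heb h
  obtain ⟨f₁, hde₁, k₁, hk₁, hfk₁⟩ := hN.exists_oplus_oplus_mem hi₁ hj₁ hda₁ heb₁ h₁
  obtain rfl : f = f₁ := Option.some.inj (hde.symm.trans hde₁)
  exact ⟨k, hk, k₁, hk₁, f, hfk, hfk₁⟩

theorem exists_oplus_of_simI_left (hN : G.IsNormalIdeal I) (hR1 : G.R1 I) (hR2 : G.R2 I)
    {a₁ : P} (h : G.oplus a b = some s) (ha : G.simI I a a₁) :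
    ∃ b₁ t, G.simI I b b₁ ∧ G.oplus a₁ b₁ = some t := by
  obtain ⟨i, hi, i₁, hi₁, d, hda, hda₁⟩ := ha
  obtain ⟨x, hix, hdx⟩ := G.assoc₁ hda h
  obtain ⟨j, hj, ⟨b₁, hjb₁⟩, hdef⟩ := (hR2 i₁ hi₁ a₁ (G.conj hda₁).2).1 x d s hda₁ hdx
  obtain ⟨t, ht⟩ := hdef b₁ hjb₁
  exact ⟨b₁, t, simI_of_mem_oplus_eq hN hR1 hi hj hix hjb₁, ht⟩

theorem exists_oplus_of_simI_right (hN : G.IsNormalIdeal I) (hR1 : G.R1 I) (hR2 : G.R2 I)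
    {b₁ : P} (h : G.oplus a b = some s) (hb : G.simI I b b₁) :
    ∃ a₁ t, G.simI I a a₁ ∧ G.oplus a₁ b₁ = some t := by
  obtain ⟨j, hj, j₁, hj₁, e, heb, heb₁⟩ := exists_mem_oplus_of_simI hN hb
  obtain ⟨x, hax, hxe⟩ := G.assoc₂ heb h
  obtain ⟨k, hk, ⟨c, hkc⟩, hdef⟩ := (hR2 j₁ hj₁ b₁ ⟨e, heb₁⟩).2 x e s heb₁ hxe
  obtain ⟨a₁, ha₁k⟩ := (G.conj hkc).1
  obtain ⟨t, ht⟩ := hdef a₁ ha₁k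
  exact ⟨a₁, t, simI_of_oplus_mem_eq hN hR1 hj hk hax ha₁k, ht⟩

theorem exists_oplus_eq_of_mem_oplus_eq_oplus (hN : G.IsNormalIdeal I) (hR1 : G.R1 I)
    {f q : P} (hq : q ∈ I) (hqf : G.oplus q f = some s) (hbc : G.oplus b c = some s) :
    ∃ b₁ c₁, G.simI I b₁ b ∧ G.simI I c₁ c ∧ G.oplus b₁ c₁ = some f := by
  obtain ⟨k, hk, l, hl, ⟨b', hkb'⟩, ⟨c₁, hlc₁⟩, t, hklt, r, hqr⟩ := hR1 q hq b c s hbc ⟨f, hqf⟩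
  obtain ⟨b₀, hb₀k⟩ := (G.conj hkb').1
  obtain ⟨x, hkc, hb₀x⟩ := G.assoc₁ hb₀k hbc
  obtain ⟨t', hklt', htc₁⟩ := G.assoc₂ hlc₁ hkc
  obtain rfl : t' = t := Option.some.inj (hklt'.symm.trans hklt)
  obtain ⟨w, hb₀t, hwc₁⟩ := G.assoc₂ htc₁ hb₀x
  obtain ⟨v, hb₀q, hvr⟩ := G.assoc₂ hqr hb₀t
  obtain ⟨e, hqe⟩ := (G.conj hb₀q).2
  obtain ⟨b₁, her, hqb₁⟩ := G.assoc₁ hqe hvr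
  obtain ⟨f', hb₁c₁, hqf'⟩ := G.assoc₁ hqb₁ hwc₁
  obtain rfl : f' = f := G.cancel_left hqf' hqf
  obtain ⟨t₁, ht₁, ht₁b₀⟩ := hN.exists_oplus_of_oplus_mem (hN.1.oplus_mem hk hl hklt) hb₀t
  have hb₁b₀ : G.simI I b₁ b₀ := simI_of_mem_oplus_eq hN hR1 hq ht₁ hqb₁ ht₁b₀
  have hb₀b : G.simI I b₀ b := simI_symm (simI_of_oplus_mem hN.1 hk hb₀k)
  exact ⟨b₁, c₁, simI_trans hN hR1 hb₁b₀ hb₀b, simI_symm (simI_of_mem_oplus hN hl hlc₁), hb₁c₁⟩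

theorem exists_oplus_eq_of_simI_oplus (hN : G.IsNormalIdeal I) (hR1 : G.R1 I)
    (hbc : G.oplus b c = some s) (ha : G.simI I a s) :
    ∃ a₁ a₂, G.simI I a₁ b ∧ G.simI I a₂ c ∧ G.oplus a₁ a₂ = some a := by
  obtain ⟨p, hp, q, hq, f, hpf, hqf⟩ := exists_mem_oplus_of_simI hN ha
  obtain ⟨b₁, c₁, hb₁, hc₁, hb₁c₁⟩ := exists_oplus_eq_of_mem_oplus_eq_oplus hN hR1 hq hqf hbc
  obtain ⟨a₁, hpb₁, ha₁c₁⟩ := G.assoc₂ hb₁c₁ hpf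
  exact ⟨a₁, c₁, simI_trans hN hR1 (simI_of_mem_oplus hN hp hpb₁) hb₁, hc₁, ha₁c₁⟩

theorem simI_cancel_common_left (hN : G.IsNormalIdeal I) (hR1 : G.R1 I) (hgcr : G.GCR I)
    {x y : P} (ha : G.oplus d x = some a) (hb : G.oplus d y = some b) (hab : G.simI I a b) :
    G.simI I x y := by
  obtain ⟨i, hi, j, hj, s, his, hjs⟩ := hgcr a b hab
  obtain ⟨u, hid, hus⟩ := G.assoc₂ ha his
  obtain ⟨v, hjd, hvs⟩ := G.assoc₂ hb hjs
  obtain ⟨i', hi', hdi'⟩ := hN.exists_oplus_of_mem_oplus hi hid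
  obtain ⟨j', hj', hdj'⟩ := hN.exists_oplus_of_mem_oplus hj hjd
  obtain ⟨x', hi'x, hdx'⟩ := G.assoc₁ hdi' hus
  obtain ⟨y', hj'y, hdy'⟩ := G.assoc₁ hdj' hvs
  obtain rfl : x' = y' := G.cancel_left hdx' hdy'
  exact simI_of_mem_oplus_eq hN hR1 hi' hj' hi'x hj'y

theorem exists_oplus_mem_eq_of_gcr (hN : G.IsNormalIdeal I) (hgcr : G.GCR I)
    (hab : G.simI I a b) : ∃ k ∈ I, ∃ l ∈ I, ∃ s, G.oplus a k = some s ∧ G.oplus b l = some s := by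
  obtain ⟨i, hi, j, hj, s, his, hjs⟩ := hgcr a b hab
  obtain ⟨k, hk, hak⟩ := hN.exists_oplus_of_mem_oplus hi his
  obtain ⟨l, hl, hbl⟩ := hN.exists_oplus_of_mem_oplus hj hjs
  exact ⟨k, hk, l, hl, s, hak, hbl⟩

theorem simI_cancel_common_right (hN : G.IsNormalIdeal I) (hR1 : G.R1 I) (hgcr : G.GCR I)
    {x y : P} (ha : G.oplus x d = some a) (hb : G.oplus y d = some b) (hab : G.simI I a b) :
    G.simI I x y := by
  obtain ⟨k, hk, l, hl, s, hak, hbl⟩ := exists_oplus_mem_eq_of_gcr hN hgcr hab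
  obtain ⟨u, hdk, hxu⟩ := G.assoc₁ ha hak
  obtain ⟨v, hdl, hyv⟩ := G.assoc₁ hb hbl
  obtain ⟨k', hk', hk'd⟩ := hN.exists_oplus_of_oplus_mem hk hdk
  obtain ⟨l', hl', hl'd⟩ := hN.exists_oplus_of_oplus_mem hl hdl
  obtain ⟨x', hxk', hx'd⟩ := G.assoc₂ hk'd hxu
  obtain ⟨y', hyl', hy'd⟩ := G.assoc₂ hl'd hyv
  obtain rfl : x' = y' := G.cancel_right hx'd hy'd
  exact simI_of_oplus_mem_eq hN hR1 hk' hl' hxk' hyl'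

theorem simI_cancel_left (hN : G.IsNormalIdeal I) (hR1 : G.R1 I) (hgcr : G.GCR I)
    {a₁ b₁ : P} (hab : G.simI I a b) (ha : G.oplus a a₁ = some s) (hb : G.oplus b b₁ = some t)
    (hst : G.simI I s t) : G.simI I a₁ b₁ := by
  obtain ⟨i, hi, j, hj, d, hda, hdb⟩ := hab
  obtain ⟨x, hix, hdx⟩ := G.assoc₁ hda ha
  obtain ⟨y, hjy, hdy⟩ := G.assoc₁ hdb hb
  have hxy := simI_cancel_common_left hN hR1 hgcr hdx hdy hst
  exact simI_trans hN hR1 (simI_trans hN hR1 (simI_symm (simI_of_mem_oplus hN hi hix)) hxy)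
    (simI_of_mem_oplus hN hj hjy)

theorem simI_cancel_right (hN : G.IsNormalIdeal I) (hR1 : G.R1 I) (hgcr : G.GCR I)
    {a₁ b₁ : P} (hab : G.simI I a b) (ha : G.oplus a₁ a = some s) (hb : G.oplus b₁ b = some t)
    (hst : G.simI I s t) : G.simI I a₁ b₁ := by
  obtain ⟨i, hi, j, hj, d, hda, hdb⟩ := hab
  obtain ⟨x, hdx, hxi⟩ := G.assoc₂ hda ha
  obtain ⟨y, hdy, hyj⟩ := G.assoc₂ hdb hb
  have hxy : G.simI I x y := simI_trans hN hR1 (simI_trans hN hR1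
    (simI_symm (simI_of_oplus_mem hN.1 hi hxi)) hst) (simI_of_oplus_mem hN.1 hj hyj)
  exact simI_cancel_common_right hN hR1 hgcr hdx hdy hxy

theorem IsUnitizing.oplus_map_iff {γ : P → P} (hγ : G.IsUnitizing γ) :
    G.oplus (γ a) (γ b) = some (γ s) ↔ G.oplus a b = some s := by
  refine ⟨fun h => ?_, hγ.2.1 a b s⟩
  obtain ⟨t, ht⟩ := hγ.2.2.1 a b ⟨γ s, h⟩
  rwa [hγ.1.1 (Option.some.inj (h.symm.trans (hγ.2.1 a b t ht)))]

theorem IsUnitizing.simI_map_iff {γ : P → P} (hγ : G.IsUnitizing γ)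
    (hγI : ∀ a : P, a ∈ I ↔ γ a ∈ I) : G.simI I (γ a) (γ b) ↔ G.simI I a b := by
  constructor
  · rintro ⟨i, hi, j, hj, d, hda, hdb⟩
    obtain ⟨i, rfl⟩ := hγ.1.2 i
    obtain ⟨j, rfl⟩ := hγ.1.2 j
    obtain ⟨d, rfl⟩ := hγ.1.2 d
    exact ⟨i, (hγI i).2 hi, j, (hγI j).2 hj, d, hγ.oplus_map_iff.1 hda, hγ.oplus_map_iff.1 hdb⟩
  · rintro ⟨i, hi, j, hj, d, hda, hdb⟩
    exact ⟨γ i, (hγI i).1 hi, γ j, (hγI j).1 hj, γ d, hγ.2.1 _ _ _ hda, hγ.2.1 _ _ _ hdb⟩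

end GPEA

section Unitization

open GPEA Sum

variable {P : Type*} {G : GPEA P} {γ : P → P}

inductive UnitizationOplus (G : GPEA P) (γ : P → P) : P ⊕ P → P ⊕ P → P ⊕ P → Prop
  | inl_inl {a b s : P} : G.oplus a b = some s → UnitizationOplus G γ (inl a) (inl b) (inl s)
  | inl_inr {a y w : P} : G.oplus w a = some y → UnitizationOplus G γ (inl a) (inr y) (inr w)
  | inr_inl {y b v : P} : G.oplus (γ b) v = some y → UnitizationOplus G γ (inr y) (inl b) (inr v)

theorem uop_eq_some_iff {x y z : P ⊕ P} : uop G γ x y = some z ↔ UnitizationOplus G γ x y z := by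
  constructor
  · intro h
    rcases x with a | a <;> rcases y with b | b <;> simp only [uop, reduceCtorEq] at h
    · obtain ⟨s, hab, rfl⟩ := Option.map_eq_some_iff.1 h
      exact .inl_inl hab
    · split_ifs at h with hle
      cases h
      exact .inl_inr (Classical.choose_spec hle)
    · split_ifs at h with hle
      cases h
      exact .inr_inl (Classical.choose_spec hle)
  · rintro (h | h | h) <;> simp only [uop]
    · rw [h, Option.map_some]
    · rw [dif_pos ⟨_, h⟩, G.cancel_right (Classical.choose_spec (⟨_, h⟩ : G.leL _ _)) h]
    · rw [dif_pos ⟨_, h⟩, G.cancel_left (Classical.choose_spec (⟨_, h⟩ : G.le _ _)) h]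

theorem rstar_equivalence {r : P → P → Prop} (hr : Equivalence r) : Equivalence (rstar r) where
  refl x := by cases x <;> exact hr.refl _
  symm {x y} h := by
    cases x <;> cases y <;> simp only [rstar] at h ⊢ <;> exact hr.symm h
  trans {x y z} h₁ h₂ := by
    cases x <;> cases y <;> cases z <;> simp only [rstar] at h₁ h₂ ⊢ <;> exact hr.trans h₁ h₂

variable {I : Set P} {U : GPEA (P ⊕ P)}

theorem isWeakCong_rstar (hN : G.IsNormalIdeal I) (hR1 : G.R1 I) (hgcr : G.GCR I)
    (hγ : G.IsUnitizing γ) (hγI : ∀ a : P, a ∈ I ↔ γ a ∈ I)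
    (hU : ∀ x y z, U.oplus x y = some z ↔ UnitizationOplus G γ x y z) :
    U.IsWeakCong (rstar (G.simI I)) := by
  refine ⟨rstar_equivalence (simI_equivalence hN hR1), fun a b a₁ b₁ s s₁ h h₁ ha hb => ?_⟩
  rw [hU] at h h₁
  rcases h with ⟨h⟩ | ⟨h⟩ | ⟨h⟩ <;> rcases h₁ with ⟨h₁⟩ | ⟨h₁⟩ | ⟨h₁⟩ <;>
    simp only [rstar] at ha hb ⊢
  · exact simI_oplus hN h h₁ ha hb
  · exact simI_cancel_right hN hR1 hgcr ha h h₁ hb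
  · exact simI_cancel_left hN hR1 hgcr ((hγ.simI_map_iff hγI).2 hb) h h₁ ha

theorem c3_rstar (hN : G.IsNormalIdeal I) (hR1 : G.R1 I) (hR2 : G.R2 I)
    (hγ : G.IsUnitizing γ) (hγI : ∀ a : P, a ∈ I ↔ γ a ∈ I)
    (hU : ∀ x y z, U.oplus x y = some z ↔ UnitizationOplus G γ x y z) :
    U.C3 (rstar (G.simI I)) := by
  intro a b s h
  rw [hU] at h
  constructor
  · rintro (a₁ | a₁) ha <;> rcases h with ⟨h⟩ | ⟨h⟩ | ⟨h⟩ <;> simp only [rstar] at ha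
    · obtain ⟨b₁, t, hb, ht⟩ := exists_oplus_of_simI_left hN hR1 hR2 h ha
      exact ⟨inl b₁, hb, inl t, (hU ..).2 (.inl_inl ht)⟩
    · obtain ⟨w₁, y₁, hw, hy₁⟩ := exists_oplus_of_simI_right hN hR1 hR2 h ha
      exact ⟨inr y₁, simI_oplus hN h hy₁ hw ha, inr w₁, (hU ..).2 (.inl_inr hy₁)⟩
    · obtain ⟨u, v₁, hu, -, huv⟩ := exists_oplus_eq_of_simI_oplus hN hR1 h (simI_symm ha)
      obtain ⟨b₁, rfl⟩ := hγ.1.2 u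
      exact ⟨inl b₁, simI_symm ((hγ.simI_map_iff hγI).1 hu), inr v₁, (hU ..).2 (.inr_inl huv)⟩
  · rintro (b₂ | b₂) hb <;> rcases h with ⟨h⟩ | ⟨h⟩ | ⟨h⟩ <;> simp only [rstar] at hb
    · obtain ⟨a₂, t, ha, ht⟩ := exists_oplus_of_simI_right hN hR1 hR2 h hb
      exact ⟨inl a₂, ha, inl t, (hU ..).2 (.inl_inl ht)⟩
    · have hγb := (hγ.simI_map_iff hγI).2 hb
      obtain ⟨v₂, y₂, hv, hy₂⟩ := exists_oplus_of_simI_left hN hR1 hR2 h hγb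
      exact ⟨inr y₂, simI_oplus hN h hy₂ hγb hv, inr v₂, (hU ..).2 (.inr_inl hy₂)⟩
    · obtain ⟨w₂, a₂, -, ha, hwa⟩ := exists_oplus_eq_of_simI_oplus hN hR1 h (simI_symm hb)
      exact ⟨inl a₂, simI_symm ha, inr w₂, (hU ..).2 (.inl_inr hwa)⟩

theorem c4_rstar (hN : G.IsNormalIdeal I) (hR1 : G.R1 I) (hgcr : G.GCR I)
    (hγ : G.IsUnitizing γ) (hγI : ∀ a : P, a ∈ I ↔ γ a ∈ I)
    (hU : ∀ x y z, U.oplus x y = some z ↔ UnitizationOplus G γ x y z) :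
    U.C4 (rstar (G.simI I)) := by
  rintro a b a₁ b₁ s t hab (⟨ha, hb, hst⟩ | ⟨ha, hb, hst⟩) <;> rw [hU] at ha hb <;>
    rcases ha with ⟨ha⟩ | ⟨ha⟩ | ⟨ha⟩ <;> rcases hb with ⟨hb⟩ | ⟨hb⟩ | ⟨hb⟩ <;>
    simp only [rstar] at hab hst ⊢
  · exact simI_cancel_left hN hR1 hgcr hab ha hb hst
  · exact simI_oplus hN ha hb hst hab
  · exact (hγ.simI_map_iff hγI).1 (simI_cancel_right hN hR1 hgcr hst ha hb hab)
  · exact simI_cancel_right hN hR1 hgcr hab ha hb hst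
  · exact simI_cancel_left hN hR1 hgcr hst ha hb hab
  · exact simI_oplus hN ha hb ((hγ.simI_map_iff hγI).2 hab) hst

theorem c5'_rstar (hN : G.IsNormalIdeal I) (hR1 : G.R1 I) (hR2 : G.R2 I)
    (hγ : G.IsUnitizing γ) (hγI : ∀ a : P, a ∈ I ↔ γ a ∈ I)
    (hU : ∀ x y z, U.oplus x y = some z ↔ UnitizationOplus G γ x y z) :
    U.C5' (rstar (G.simI I)) := by
  intro a b c s h ha
  rw [hU] at h
  rcases h with ⟨h⟩ | ⟨h⟩ | ⟨h⟩ <;> rcases a with a | a <;> simp only [rstar] at ha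
  · obtain ⟨a₁, a₂, h₁, h₂, h₁₂⟩ := exists_oplus_eq_of_simI_oplus hN hR1 h ha
    exact ⟨inl a₁, inl a₂, h₁, h₂, (hU ..).2 (.inl_inl h₁₂)⟩
  · obtain ⟨b₁, t, hb, ht⟩ := exists_oplus_of_simI_left hN hR1 hR2 h (simI_symm ha)
    exact ⟨inl b₁, inr t, simI_symm hb, simI_oplus hN ht h ha (simI_symm hb),
      (hU ..).2 (.inl_inr ht)⟩
  · obtain ⟨u, t, hu, ht⟩ := exists_oplus_of_simI_right hN hR1 hR2 h (simI_symm ha)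
    obtain ⟨c₁, rfl⟩ := hγ.1.2 u
    exact ⟨inr t, inl c₁, simI_oplus hN ht h (simI_symm hu) ha,
      simI_symm ((hγ.simI_map_iff hγI).1 hu), (hU ..).2 (.inr_inl ht)⟩

theorem rstar_zero_of_oplus_inl (hI : G.IsIdeal I)
    (hU : ∀ x y z, U.oplus x y = some z ↔ UnitizationOplus G γ x y z)
    (hz : U.zero = inl G.zero) {e a : P} (h : ∀ x, G.oplus x e = some a → x ∈ I) (x : P ⊕ P)
    (hx : U.oplus x (inl e) = some (inl a)) : rstar (G.simI I) x U.zero := by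
  rw [hU] at hx
  cases hx with
  | inl_inl hx => rw [hz]; exact simI_zero_of_mem hI (h _ hx)

theorem rstar_zero_of_oplus_inr (hI : G.IsIdeal I)
    (hU : ∀ x y z, U.oplus x y = some z ↔ UnitizationOplus G γ x y z)
    (hz : U.zero = inl G.zero) {y w : P} (h : ∀ x, G.oplus w x = some y → x ∈ I) (x : P ⊕ P)
    (hx : U.oplus x (inr y) = some (inr w)) : rstar (G.simI I) x U.zero := by
  rw [hU] at hx
  cases hx with
  | inl_inr hx => rw [hz]; exact simI_zero_of_mem hI (h _ hx)

theorem cr_rstar (hN : G.IsNormalIdeal I) (hgcr : G.GCR I) (hγ : G.IsUnitizing γ)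
    (hU : ∀ x y z, U.oplus x y = some z ↔ UnitizationOplus G γ x y z)
    (hz : U.zero = inl G.zero) : U.CR (rstar (G.simI I)) := by
  have zero_inl {e a : P} := rstar_zero_of_oplus_inl (e := e) (a := a) hN.1 hU hz
  have zero_inr {y w : P} := rstar_zero_of_oplus_inr (y := y) (w := w) hN.1 hU hz
  rintro (a | a) (b | b) hab <;> simp only [rstar] at hab
  · obtain ⟨i, hi, j, hj, s, his, hjs⟩ := hgcr a b hab
    obtain ⟨i₀, hi₀, j₀, hj₀, e, hea, heb⟩ := hab
    obtain ⟨k, hak⟩ := (G.conj his).2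
    obtain ⟨l, hbl⟩ := (G.conj hjs).2
    refine ⟨inl e, inl s, ⟨inl i₀, (hU ..).2 (.inl_inl hea)⟩, ⟨inl k, (hU ..).2 (.inl_inl hak)⟩,
      ⟨inl j₀, (hU ..).2 (.inl_inl heb)⟩, ⟨inl l, (hU ..).2 (.inl_inl hbl)⟩,
      zero_inl fun x hx => (hN.2 x i₀ e a hx hea).2 hi₀,
      zero_inl fun x hx => (hN.2 x j₀ e b hx heb).2 hj₀,
      zero_inl fun x hx => G.cancel_right his hx ▸ hi,
      zero_inl fun x hx => G.cancel_right hjs hx ▸ hj⟩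
  · -- `η` reverses the order of `P`: `ηs` is the lower bound and `ηf` the upper one.
    obtain ⟨i, hi, j, hj, s, hai, hbj⟩ := exists_oplus_mem_eq_of_gcr hN hgcr hab
    obtain ⟨p, hp, q, hq, f, hpf, hqf⟩ := exists_mem_oplus_of_simI hN hab
    obtain ⟨k, hka⟩ := (G.conj hai).1
    obtain ⟨l, hlb⟩ := (G.conj hbj).1
    obtain ⟨k, rfl⟩ := hγ.1.2 k
    obtain ⟨l, rfl⟩ := hγ.1.2 l
    obtain ⟨p, rfl⟩ := hγ.1.2 p
    obtain ⟨q, rfl⟩ := hγ.1.2 q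
    refine ⟨inr s, inr f, ⟨inl k, (hU ..).2 (.inr_inl hka)⟩, ⟨inl p, (hU ..).2 (.inr_inl hpf)⟩,
      ⟨inl l, (hU ..).2 (.inr_inl hlb)⟩, ⟨inl q, (hU ..).2 (.inr_inl hqf)⟩,
      zero_inr fun x hx => G.cancel_left hai hx ▸ hi,
      zero_inr fun x hx => G.cancel_left hbj hx ▸ hj,
      zero_inr fun x hx => (hN.2 _ x f a hpf hx).1 hp,
      zero_inr fun x hx => (hN.2 _ x f b hqf hx).1 hq⟩

theorem gcr_of_cr_rstar (hU : ∀ x y z, U.oplus x y = some z ↔ UnitizationOplus G γ x y z)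
    (hz : U.zero = inl G.zero) (hCR : U.CR (rstar (G.simI I))) : G.GCR I := by
  intro a b hab
  obtain ⟨-, d, -, ⟨_, had⟩, -, ⟨_, hbd⟩, -, -, hda, hdb⟩ := hCR (inl a) (inl b) hab
  obtain ⟨x, hxa⟩ := (U.conj had).1
  obtain ⟨y, hyb⟩ := (U.conj hbd).1
  have hx := hda x hxa
  have hy := hdb y hyb
  rw [hz] at hx hy
  rw [hU] at hxa hyb
  rcases x with x | x <;> rcases y with y | y <;> simp only [rstar] at hx hy
  rcases hxa with ⟨hxa⟩
  rcases hyb with ⟨hyb⟩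
  exact ⟨x, mem_of_simI_zero hx, y, mem_of_simI_zero hy, _, hxa, hyb⟩

end Unitization

theorem stmt16_general {P : Type*} (G : GPEA P) (γ : P → P) (hγ : G.IsUnitizing γ)
    (I : Set P) (hI : G.IsNormalRieszIdeal I) (hγI : ∀ a : P, a ∈ I ↔ γ a ∈ I)
    (U : PEA (P ⊕ P)) (hop : U.toGPEA.oplus = uop G γ)
    (hz : U.toGPEA.zero = Sum.inl G.zero) :
    U.toGPEA.IsRieszCong (rstar (G.simI I)) ↔ G.GCR I := by
  have hU : ∀ x y z, U.oplus x y = some z ↔ UnitizationOplus G γ x y z := by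
    intro x y z
    rw [hop]
    exact uop_eq_some_iff
  obtain ⟨hN, hR1, hR2⟩ := hI
  refine ⟨fun h => gcr_of_cr_rstar hU hz h.2.2.2.2, fun hgcr => ?_⟩
  exact ⟨isWeakCong_rstar hN hR1 hgcr hγ hγI hU, c3_rstar hN hR1 hR2 hγ hγI hU,
    c4_rstar hN hR1 hgcr hγ hγI hU, c5'_rstar hN hR1 hR2 hγ hγI hU, cr_rstar hN hgcr hγ hU hz⟩

theorem stmt16 {P : Type*} (G : GPEA P) (γ : P → P) (hγ : G.IsUnitizing γ)
    (I : Set P) (hI : G.IsNormalRieszIdeal I) (hγI : ∀ a : P, a ∈ I ↔ γ a ∈ I)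
    (U : PEA (P ⊕ P)) (hop : U.toGPEA.oplus = uop G γ)
    (hz : U.toGPEA.zero = Sum.inl G.zero) (ho : U.one = Sum.inr G.zero) :
    U.toGPEA.IsRieszCong (rstar (G.simI I)) ↔ G.GCR I :=
  stmt16_general G γ hγ I hI hγI U hop hz
end

section
/- If P is an upward directed GPEA with unitizing automorphism γ and U is its γ-unitization, then every normal Riesz γ-ideal I in P is also a normal Riesz ideal in U. -/
open scoped Classical

/-!
In the `γ`-unitization, `Sum.inl a` is `a ∈ P` and `Sum.inr b` is the co-element `ηb`: `a ≤ ηb`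
holds exactly when `b ⊕ a` is defined, and no `ηb` lies below an element of `P`. So every
condition on `Sum.inl '' I` splits into cases. Inside `P` they are the hypotheses on `I`; in a
mixed case `a ⊕ ηb` or `ηb ⊕ a` is `η` of a difference in `P`, and the condition becomes a
statement about `P`. Such a statement is proved by taking, via upward directedness, a common
upper bound among the elements that still sum with a fixed `s`, and applying (R1) and normality
of `I` below it. The twist by `γ` in `ηb ⊕ a` is undone by transporting along the automorphism
`γ`; left-right mirror images follow by passing to the opposite GPEA.
-/

namespace GPEA

variable {P : Type*} {G : GPEA P} {I : Set P}

theorem right_le_of_oplus_eq_some {a b d : P} (h : G.oplus d a = some b) : G.le a b := (G.conj h).2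

theorem exists_oplus_eq_some_of_le {a b : P} (h : G.le a b) : ∃ d, G.oplus d a = some b :=
  let ⟨_, hc⟩ := h; (G.conj hc).1

theorem le_trans {a b c : P} (hab : G.le a b) (hbc : G.le b c) : G.le a c := by
  obtain ⟨x, hx⟩ := hab
  obtain ⟨y, hy⟩ := hbc
  obtain ⟨z, -, hz⟩ := G.assoc₁ hx hy
  exact ⟨z, hz⟩

theorem exists_oplus_le_of_le_left {x y z s : P} (hxy : G.le x y) (h : G.oplus y z = some s) :
    ∃ t, G.oplus x z = some t ∧ G.le t s := by
  obtain ⟨d, hd⟩ := exists_oplus_eq_some_of_le hxy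
  obtain ⟨t, ht, hdt⟩ := G.assoc₁ hd h
  exact ⟨t, ht, right_le_of_oplus_eq_some hdt⟩

theorem exists_oplus_le_of_le_right {x y z s : P} (hxy : G.le x y) (h : G.oplus z y = some s) :
    ∃ t, G.oplus z x = some t ∧ G.le t s := by
  obtain ⟨c, hc⟩ := hxy
  obtain ⟨t, ht, htc⟩ := G.assoc₂ hc h
  exact ⟨t, ht, c, htc⟩

theorem oplus_le_oplus_of_le_left {x y z a b : P} (hxy : G.le x y) (ha : G.oplus x z = some a)
    (hb : G.oplus y z = some b) : G.le a b := by
  obtain ⟨t, ht, htb⟩ := exists_oplus_le_of_le_left hxy hb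
  rwa [Option.some_inj.1 (ha.symm.trans ht)]

theorem oplus_le_oplus_of_le_right {x y z a b : P} (hxy : G.le x y) (ha : G.oplus z x = some a)
    (hb : G.oplus z y = some b) : G.le a b := by
  obtain ⟨t, ht, htb⟩ := exists_oplus_le_of_le_right hxy hb
  rwa [Option.some_inj.1 (ha.symm.trans ht)]

theorem exists_upper_bound_of_oplus_left (hdir : ∀ a b : P, ∃ c, G.le a c ∧ G.le b c)
    {s x y p q : P} (hx : G.oplus s x = some p) (hy : G.oplus s y = some q) :
    ∃ z, G.le x z ∧ G.le y z ∧ ∃ T, G.oplus s z = some T := by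
  obtain ⟨T, ⟨f, hf⟩, ⟨g, hg⟩⟩ := hdir p q
  obtain ⟨z, hxz, hz⟩ := G.assoc₁ hx hf
  obtain ⟨z', hyz, hz'⟩ := G.assoc₁ hy hg
  obtain rfl := G.cancel_left hz hz'
  exact ⟨z, ⟨f, hxz⟩, ⟨g, hyz⟩, T, hz⟩

def swap (G : GPEA P) : GPEA P where
  oplus a b := G.oplus b a
  zero := G.zero
  assoc₁ h₁ h₂ := G.assoc₂ h₁ h₂
  assoc₂ h₁ h₂ := G.assoc₁ h₁ h₂
  conj h := (G.conj h).symm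
  cancel_right := G.cancel_left
  cancel_left := G.cancel_right
  oplus_zero := G.zero_oplus
  zero_oplus := G.oplus_zero
  pos h := (G.pos h).symm

@[simp]
theorem swap_oplus (a b : P) : G.swap.oplus a b = G.oplus b a := rfl

@[simp]
theorem swap_le_iff {a b : P} : G.swap.le a b ↔ G.le a b :=
  ⟨fun ⟨_, h⟩ => right_le_of_oplus_eq_some h, exists_oplus_eq_some_of_le⟩

theorem exists_upper_bound_of_oplus_right (hdir : ∀ a b : P, ∃ c, G.le a c ∧ G.le b c)
    {s x y p q : P} (hx : G.oplus x s = some p) (hy : G.oplus y s = some q) :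
    ∃ z, G.le x z ∧ G.le y z ∧ ∃ T, G.oplus z s = some T := by
  simpa using G.swap.exists_upper_bound_of_oplus_left (by simpa using hdir) hx hy

def IsNormal (G : GPEA P) (I : Set P) : Prop :=
  ∀ a b c s : P, G.oplus a c = some s → G.oplus c b = some s → (a ∈ I ↔ b ∈ I)

theorem IsNormal.swap (hN : G.IsNormal I) : G.swap.IsNormal I :=
  fun a b c s h₁ h₂ => (hN b a c s h₂ h₁).symm

theorem IsNormal.exists_oplus_mem_eq (hN : G.IsNormal I) {i c w : P} (hi : i ∈ I)
    (h : G.oplus i c = some w) : ∃ d ∈ I, G.oplus c d = some w := by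
  obtain ⟨d, hd⟩ := (G.conj h).2
  exact ⟨d, (hN i d c w h hd).1 hi, hd⟩

theorem IsNormal.exists_mem_oplus_eq (hN : G.IsNormal I) {i c w : P} (hi : i ∈ I)
    (h : G.oplus c i = some w) : ∃ d ∈ I, G.oplus d c = some w :=
  hN.swap.exists_oplus_mem_eq hi h

theorem R1.swap (hR1 : G.R1 I) : G.swap.R1 I := by
  intro i hi a b s h his
  obtain ⟨j, hj, k, hk, hjb, hka, t, ht, hit⟩ := hR1 i hi b a s h (swap_le_iff.1 his)
  exact ⟨k, hk, j, hj, swap_le_iff.2 hka, swap_le_iff.2 hjb, t, ht, swap_le_iff.2 hit⟩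

theorem R1.exists_le_left (hR1 : G.R1 I) {i a b s : P} (hi : i ∈ I)
    (h : G.oplus a b = some s) (his : G.le i s) :
    ∃ j ∈ I, G.le j a ∧ ∃ t, G.oplus j b = some t ∧ G.le i t := by
  obtain ⟨j, hj, k, -, hja, hkb, t, ht, hit⟩ := hR1 i hi a b s h his
  obtain ⟨t', ht', -⟩ := exists_oplus_le_of_le_left hja h
  exact ⟨j, hj, hja, t', ht', le_trans hit (oplus_le_oplus_of_le_right hkb ht ht')⟩

theorem exists_le_oplus_mem (hN : G.IsNormal I) (hR1 : G.R1 I)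
    (hdir : ∀ a b : P, ∃ c, G.le a c ∧ G.le b c) {i x s a b : P} (hi : i ∈ I)
    (ha : G.oplus x i = some a) (hb : G.oplus s x = some b) :
    ∃ j ∈ I, ∃ W, G.oplus b j = some W ∧ G.le a W := by
  obtain ⟨d, hd, hda⟩ := hN.exists_mem_oplus_eq hi ha
  obtain ⟨E, hdE, hsE, T, hET⟩ := exists_upper_bound_of_oplus_right hdir hda hb
  obtain ⟨e, he⟩ := exists_oplus_eq_some_of_le hsE
  obtain ⟨p, hp, hpe, Q, hpQ, hdQ⟩ := hR1.exists_le_left hd he hdE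
  obtain ⟨Q', hpQ', hQE⟩ := exists_oplus_le_of_le_left hpe he
  obtain rfl := Option.some_inj.1 (hpQ.symm.trans hpQ')
  -- `a = d ⊕ x ≤ (p ⊕ s) ⊕ x = p ⊕ b`, and normality moves `p` to the right of `b`.
  obtain ⟨W, hQW, -⟩ := exists_oplus_le_of_le_left hQE hET
  have haW : G.le a W := oplus_le_oplus_of_le_left hdQ hda hQW
  obtain ⟨b', hb', hpb⟩ := G.assoc₁ hpQ hQW
  obtain rfl := Option.some_inj.1 (hb.symm.trans hb')
  obtain ⟨j, hj, hbj⟩ := hN.exists_oplus_mem_eq hp hpb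
  exact ⟨j, hj, W, hbj, haW⟩

theorem exists_le_mem_oplus (hN : G.IsNormal I) (hR1 : G.R1 I)
    (hdir : ∀ a b : P, ∃ c, G.le a c ∧ G.le b c) {i x s a b : P} (hi : i ∈ I)
    (ha : G.oplus i x = some a) (hb : G.oplus x s = some b) :
    ∃ j ∈ I, ∃ W, G.oplus j b = some W ∧ G.le a W := by
  simpa using G.swap.exists_le_oplus_mem hN.swap hR1.swap (by simpa using hdir) hi ha hb

theorem exists_mem_oplus_eq_of_le_mem_oplus (hN : G.IsNormal I) (hR1 : G.R1 I) {i a x b : P}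
    (hi : i ∈ I) (hx : G.oplus i a = some x) (hbx : G.le b x) :
    ∃ j ∈ I, ∃ c, G.oplus j c = some b ∧ G.le c a := by
  obtain ⟨i', hi', hai'⟩ := hN.exists_oplus_mem_eq hi hx
  obtain ⟨s, hbs⟩ := hbx
  obtain ⟨p, hp, hpb, m, hpm, hi'm⟩ :=
    hR1.exists_le_left hi' hbs (right_le_of_oplus_eq_some hai')
  obtain ⟨c, hcp⟩ := exists_oplus_eq_some_of_le hpb
  obtain ⟨m', hpm', hcm⟩ := G.assoc₁ hcp hbs
  obtain rfl := Option.some_inj.1 (hpm.symm.trans hpm')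
  -- `(c ⊕ n) ⊕ i' = c ⊕ m = x = a ⊕ i'`, so cancelling `i'` gives `c ⊕ n = a`.
  obtain ⟨n, hni'⟩ := exists_oplus_eq_some_of_le hi'm
  obtain ⟨a', hca', ha'i'⟩ := G.assoc₂ hni' hcm
  obtain rfl := G.cancel_right ha'i' hai'
  obtain ⟨j, hj, hjc⟩ := hN.exists_mem_oplus_eq hp hcp
  exact ⟨j, hj, c, hjc, n, hca'⟩

theorem exists_oplus_mem_eq_of_le_oplus_mem (hN : G.IsNormal I) (hR1 : G.R1 I) {i a x b : P}
    (hi : i ∈ I) (hx : G.oplus a i = some x) (hbx : G.le b x) :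
    ∃ j ∈ I, ∃ c, G.oplus c j = some b ∧ G.le c a := by
  simpa using G.swap.exists_mem_oplus_eq_of_le_mem_oplus hN.swap hR1.swap hi hx (by simpa using hbx)

theorem R1.exists_of_oplus_left (hR1 : G.R1 I) (hdir : ∀ a b : P, ∃ c, G.le a c ∧ G.le b c)
    {i s u a b : P} (hi : i ∈ I) (hsi : G.oplus s i = some u) (hsa : G.oplus s a = some b) :
    ∃ j ∈ I, ∃ k ∈ I, G.le j a ∧ (∃ w, G.oplus b k = some w) ∧
      ∃ t, G.oplus j k = some t ∧ G.le i t := by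
  obtain ⟨z, hiz, ⟨f, haf⟩, T, hsz⟩ := exists_upper_bound_of_oplus_left hdir hsi hsa
  obtain ⟨j, hj, k, hk, hja, hkf, t, hjk, hit⟩ := hR1 i hi a f z haf hiz
  obtain ⟨b', hsa', hbf⟩ := G.assoc₂ haf hsz
  obtain rfl := Option.some_inj.1 (hsa.symm.trans hsa')
  obtain ⟨w, hbk, -⟩ := exists_oplus_le_of_le_right hkf hbf
  exact ⟨j, hj, k, hk, hja, ⟨w, hbk⟩, t, hjk, hit⟩

namespace IsUnitizing

variable {γ : P → P}

theorem injective (hγ : G.IsUnitizing γ) : Function.Injective γ := hγ.1.1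

theorem surjective (hγ : G.IsUnitizing γ) : Function.Surjective γ := hγ.1.2

theorem exists_oplus_iff (hγ : G.IsUnitizing γ) (a b : P) :
    (∃ s, G.oplus (γ a) b = some s) ↔ ∃ t, G.oplus b a = some t := hγ.2.2.2 a b

theorem oplus_map (hγ : G.IsUnitizing γ) (a b : P) :
    G.oplus (γ a) (γ b) = (G.oplus a b).map γ := by
  obtain ⟨-, hmor, hrefl, -⟩ := hγ
  cases h : G.oplus a b with
  | some s => exact hmor a b s h
  | none =>
    by_contra hne
    obtain ⟨t, ht⟩ := hrefl a b (Option.ne_none_iff_exists'.1 hne)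
    exact absurd (h.symm.trans ht) nofun

theorem oplus_eq_some_iff (hγ : G.IsUnitizing γ) {a b s : P} :
    G.oplus (γ a) (γ b) = some (γ s) ↔ G.oplus a b = some s := by
  rw [hγ.oplus_map, ← Option.map_some, (Option.map_injective hγ.injective).eq_iff]

theorem le_iff (hγ : G.IsUnitizing γ) {a b : P} : G.le (γ a) (γ b) ↔ G.le a b := by
  constructor
  · rintro ⟨c, hc⟩
    obtain ⟨c, rfl⟩ := hγ.surjective c
    rw [hγ.oplus_map, Option.map_eq_some_iff] at hc
    obtain ⟨b', hb', hbb'⟩ := hc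
    exact ⟨c, hγ.injective hbb' ▸ hb'⟩
  · rintro ⟨c, hc⟩
    exact ⟨γ c, by rw [hγ.oplus_map, hc]; rfl⟩

end IsUnitizing

theorem R1.exists_of_oplus_right (hR1 : G.R1 I) (hdir : ∀ a b : P, ∃ c, G.le a c ∧ G.le b c)
    {γ : P → P} (hγ : G.IsUnitizing γ) {i s u a b : P} (hi : i ∈ I)
    (hsi : G.oplus s i = some u) (hba : G.oplus (γ b) s = some a) :
    ∃ j ∈ I, ∃ k ∈ I, (∃ w, G.oplus a j = some w) ∧ G.le k b ∧
      ∃ t, G.oplus j k = some t ∧ G.le i t := by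
  obtain ⟨v, hv⟩ := (hγ.exists_oplus_iff i s).2 ⟨u, hsi⟩
  obtain ⟨E, hiE, hbE, T, hET⟩ := exists_upper_bound_of_oplus_right hdir hv hba
  obtain ⟨E, rfl⟩ := hγ.surjective E
  obtain ⟨e, he⟩ := exists_oplus_eq_some_of_le (hγ.le_iff.1 hbE)
  obtain ⟨j, hj, k, hk, hje, hkb, t, hjk, hit⟩ := hR1 i hi e b E he (hγ.le_iff.1 hiE)
  have heb : G.oplus (γ e) (γ b) = some (γ E) := by rw [hγ.oplus_map, he]; rfl
  obtain ⟨a', hba', hea⟩ := G.assoc₁ heb hET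
  obtain rfl := Option.some_inj.1 (hba.symm.trans hba')
  obtain ⟨w, hja, -⟩ := exists_oplus_le_of_le_left (hγ.le_iff.2 hje) hea
  exact ⟨j, hj, k, hk, (hγ.exists_oplus_iff j a).1 ⟨w, hja⟩, hkb, t, hjk, hit⟩

end GPEA

section Unitization

variable {P : Type*} {G : GPEA P} {γ : P → P}

@[simp]
theorem uop_inl_inl (a b : P) : uop G γ (.inl a) (.inl b) = (G.oplus a b).map .inl := rfl

@[simp]
theorem uop_inr_inr (a b : P) : uop G γ (.inr a) (.inr b) = none := rfl

@[simp]
theorem uop_inl_inr_eq_some_iff {a b : P} {u : P ⊕ P} :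
    uop G γ (.inl a) (.inr b) = some u ↔ ∃ d, G.oplus d a = some b ∧ u = .inr d := by
  by_cases h : G.leL a b
  · simp only [uop, dif_pos h, Option.some_inj]
    constructor
    · rintro rfl
      exact ⟨_, Classical.choose_spec h, rfl⟩
    · rintro ⟨d, hd, rfl⟩
      rw [G.cancel_right (Classical.choose_spec h) hd]
  · simp only [uop, dif_neg h, reduceCtorEq, false_iff, not_exists, not_and]
    exact fun d hd _ => h ⟨d, hd⟩

@[simp]
theorem uop_inr_inl_eq_some_iff {a b : P} {u : P ⊕ P} :
    uop G γ (.inr a) (.inl b) = some u ↔ ∃ c, G.oplus (γ b) c = some a ∧ u = .inr c := by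
  by_cases h : G.le (γ b) a
  · simp only [uop, dif_pos h, Option.some_inj]
    constructor
    · rintro rfl
      exact ⟨_, Classical.choose_spec h, rfl⟩
    · rintro ⟨c, hc, rfl⟩
      rw [G.cancel_left (Classical.choose_spec h) hc]
  · simp only [uop, dif_neg h, reduceCtorEq, false_iff, not_exists, not_and]
    exact fun c hc _ => h ⟨c, hc⟩

theorem uop_eq_some_inl_iff {u v : P ⊕ P} {s : P} :
    uop G γ u v = some (.inl s) ↔
      ∃ a b, u = .inl a ∧ v = .inl b ∧ G.oplus a b = some s := by
  rcases u with a | a <;> rcases v with b | b <;> simp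

theorem uop_inl_eq_some_inr_iff {a w : P} {v : P ⊕ P} :
    uop G γ (.inl a) v = some (.inr w) ↔ ∃ b, v = .inr b ∧ G.oplus w a = some b := by
  rcases v with b | b <;> simp

variable {V : GPEA (P ⊕ P)} {I : Set P}

theorem le_inl_iff (hV : V.oplus = uop G γ) {u : P ⊕ P} {y : P} :
    V.le u (.inl y) ↔ ∃ x, u = .inl x ∧ G.le x y := by
  simp only [GPEA.le, hV, uop_eq_some_inl_iff]
  constructor
  · rintro ⟨-, x, c, rfl, rfl, hc⟩
    exact ⟨x, rfl, c, hc⟩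
  · rintro ⟨x, rfl, c, hc⟩
    exact ⟨.inl c, x, c, rfl, rfl, hc⟩

theorem inl_le_inl_iff (hV : V.oplus = uop G γ) {x y : P} :
    V.le (.inl x) (.inl y) ↔ G.le x y := by
  simp [le_inl_iff hV]

theorem inl_le_inr_iff (hV : V.oplus = uop G γ) {x y : P} :
    V.le (.inl x) (.inr y) ↔ ∃ w, G.oplus y x = some w := by
  simp only [GPEA.le, hV, uop_inl_eq_some_inr_iff]
  constructor
  · rintro ⟨-, w, rfl, hw⟩
    exact ⟨w, hw⟩
  · rintro ⟨w, hw⟩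
    exact ⟨.inr w, w, rfl, hw⟩

theorem isIdeal_image_inl (hV : V.oplus = uop G γ) (hI : G.IsIdeal I) :
    V.IsIdeal (Sum.inl '' I) := by
  obtain ⟨⟨i, hi⟩, hdown, hsum⟩ := hI
  refine ⟨⟨.inl G.zero, G.zero, hdown i hi _ ⟨i, G.zero_oplus i⟩, rfl⟩, ?_, ?_⟩
  · rintro _ ⟨s, hs, rfl⟩ b hb
    obtain ⟨b, rfl, hbs⟩ := (le_inl_iff hV).1 hb
    exact ⟨b, hdown s hs b hbs, rfl⟩
  · rintro _ ⟨a, ha, rfl⟩ _ ⟨b, hb, rfl⟩ s hs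
    rw [hV, uop_inl_inl, Option.map_eq_some_iff] at hs
    obtain ⟨s, hs, rfl⟩ := hs
    exact ⟨s, hsum a ha b hb s hs, rfl⟩

theorem isNormal_image_inl (hV : V.oplus = uop G γ) (hγI : ∀ a : P, a ∈ I ↔ γ a ∈ I)
    (hN : G.IsNormal I) : V.IsNormal (Sum.inl '' I) := by
  intro a b c s hac hcb
  rcases a with a | a <;> rcases c with c | c <;> rcases b with b | b <;>
    rcases s with s | s <;>
    simp only [hV, uop_inl_inl, uop_inr_inr, uop_inl_inr_eq_some_iff, uop_inr_inl_eq_some_iff,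
        Option.map_eq_some_iff, Sum.inl.injEq, Sum.inr.injEq, Set.mem_image, exists_eq_right,
        exists_eq_right', reduceCtorEq, and_false, exists_false] at hac hcb ⊢
  · exact hN a b c s hac hcb
  · exact (hN _ _ _ _ hcb hac).symm.trans (hγI b).symm

theorem r1_image_inl (hV : V.oplus = uop G γ) (hγ : G.IsUnitizing γ)
    (hdir : ∀ a b : P, ∃ c, G.le a c ∧ G.le b c) (hR1 : G.R1 I) : V.R1 (Sum.inl '' I) := by
  rintro _ ⟨i, hi, rfl⟩ a b s hab his
  simp only [Set.exists_mem_image]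
  rcases a with a | a <;> rcases b with b | b <;> rcases s with s | s <;>
    simp only [hV, inl_le_inl_iff hV, inl_le_inr_iff hV, uop_inl_inl, uop_inr_inr,
        uop_inl_inr_eq_some_iff, uop_inr_inl_eq_some_iff, Option.map_eq_some_iff, Sum.inl.injEq,
        Sum.inr.injEq, exists_eq_right, exists_eq_right', exists_exists_and_eq_and, reduceCtorEq,
        and_false, exists_false] at hab his ⊢
  · exact hR1 i hi a b s hab his
  · obtain ⟨u, hu⟩ := his
    exact hR1.exists_of_oplus_left hdir hi hu hab
  · obtain ⟨u, hu⟩ := his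
    exact hR1.exists_of_oplus_right hdir hγ hi hu hab

theorem r2_left_image_inl (hV : V.oplus = uop G γ) (hγ : G.IsUnitizing γ)
    (hdir : ∀ a b : P, ∃ c, G.le a c ∧ G.le b c) (hN : G.IsNormal I) (hR1 : G.R1 I)
    (hR2 : G.R2 I) {i : P} (hi : i ∈ I) {a b x s : P ⊕ P} (hxi : V.oplus x (.inl i) = some a)
    (hxb : V.oplus x b = some s) :
    ∃ j ∈ Sum.inl '' I, V.le j b ∧
      ∀ c, V.oplus j c = some b → ∃ t, V.oplus a c = some t := by
  simp only [Set.exists_mem_image]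
  rcases x with x | x <;> rcases a with a | a <;> rcases b with b | b <;> rcases s with s | s <;>
    simp only [hV, inl_le_inl_iff hV, inl_le_inr_iff hV, uop_inl_inl, uop_inr_inr,
        uop_inl_inr_eq_some_iff, uop_inr_inl_eq_some_iff, Option.map_eq_some_iff, Sum.inl.injEq,
        Sum.inr.injEq, Sum.exists, Sum.forall, exists_eq_right, exists_eq_right', reduceCtorEq,
        and_false, and_true, true_and, exists_false, false_or, or_false, or_self,
        IsEmpty.forall_iff, implies_true] at hxi hxb ⊢
  · exact (hR2 i hi a (GPEA.right_le_of_oplus_eq_some hxi)).1 b x s hxi hxb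
  · obtain ⟨j, hj, W, hbj, haW⟩ := GPEA.exists_le_oplus_mem hN hR1 hdir hi hxi hxb
    refine ⟨j, hj, ⟨W, hbj⟩, fun W' hbj' => ?_⟩
    obtain rfl := Option.some_inj.1 (hbj.symm.trans hbj')
    exact GPEA.exists_oplus_eq_some_of_le haW
  · obtain ⟨a, rfl⟩ := hγ.surjective a
    obtain ⟨x, rfl⟩ := hγ.surjective x
    obtain ⟨j, hj, C, hjC, hCa⟩ := GPEA.exists_mem_oplus_eq_of_le_mem_oplus hN hR1 hi
      (hγ.oplus_eq_some_iff.1 hxi) (hγ.le_iff.1 ⟨s, hxb⟩)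
    refine ⟨j, hj, ⟨C, hjC⟩, fun c hjc => ?_⟩
    obtain rfl := G.cancel_left hjC hjc
    exact hγ.le_iff.2 hCa

theorem r2_right_image_inl (hV : V.oplus = uop G γ) (hγ : G.IsUnitizing γ)
    (hdir : ∀ a b : P, ∃ c, G.le a c ∧ G.le b c) (hN : G.IsNormal I) (hR1 : G.R1 I)
    (hR2 : G.R2 I) {i : P} (hi : i ∈ I) {a b y s : P ⊕ P} (hiy : V.oplus (.inl i) y = some a)
    (hby : V.oplus b y = some s) :
    ∃ k ∈ Sum.inl '' I, V.le k b ∧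
      ∀ z, V.oplus z k = some b → ∃ t, V.oplus z a = some t := by
  simp only [Set.exists_mem_image]
  rcases y with y | y <;> rcases a with a | a <;> rcases b with b | b <;> rcases s with s | s <;>
    simp only [hV, inl_le_inl_iff hV, inl_le_inr_iff hV, uop_inl_inl, uop_inr_inr,
        uop_inl_inr_eq_some_iff, uop_inr_inl_eq_some_iff, Option.map_eq_some_iff, Sum.inl.injEq,
        Sum.inr.injEq, Sum.exists, Sum.forall, exists_eq_right, exists_eq_right', reduceCtorEq,
        and_false, and_true, true_and, exists_false, false_or, or_false, or_self,
        IsEmpty.forall_iff, implies_true] at hiy hby ⊢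
  · exact (hR2 i hi a ⟨y, hiy⟩).2 b y s hiy hby
  · obtain ⟨b, rfl⟩ := hγ.surjective b
    obtain ⟨s, rfl⟩ := hγ.surjective s
    obtain ⟨k, hk, W, hkb, haW⟩ :=
      GPEA.exists_le_mem_oplus hN hR1 hdir hi hiy (hγ.oplus_eq_some_iff.1 hby)
    have hkb' : G.oplus (γ k) (γ b) = some (γ W) := hγ.oplus_eq_some_iff.2 hkb
    refine ⟨k, hk, (hγ.exists_oplus_iff k (γ b)).1 ⟨_, hkb'⟩, fun W' hkb'' => ?_⟩
    obtain rfl := Option.some_inj.1 (hkb'.symm.trans hkb'')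
    exact hγ.le_iff.2 haW
  · obtain ⟨k, hk, C, hCk, hCa⟩ := GPEA.exists_oplus_mem_eq_of_le_oplus_mem hN hR1 hi hiy
      (GPEA.right_le_of_oplus_eq_some hby)
    refine ⟨k, hk, GPEA.right_le_of_oplus_eq_some hCk, fun z hzk => ?_⟩
    obtain rfl := G.cancel_right hCk hzk
    exact GPEA.exists_oplus_eq_some_of_le hCa

theorem r2_image_inl (hV : V.oplus = uop G γ) (hγ : G.IsUnitizing γ)
    (hdir : ∀ a b : P, ∃ c, G.le a c ∧ G.le b c) (hN : G.IsNormal I) (hR1 : G.R1 I)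
    (hR2 : G.R2 I) : V.R2 (Sum.inl '' I) := by
  rintro _ ⟨i, hi, rfl⟩ a -
  exact ⟨fun b x s hxi hxb => r2_left_image_inl hV hγ hdir hN hR1 hR2 hi hxi hxb,
    fun b y s hiy hby => r2_right_image_inl hV hγ hdir hN hR1 hR2 hi hiy hby⟩

end Unitization

theorem stmt18_general {P : Type*} (G : GPEA P) (γ : P → P) (hγ : G.IsUnitizing γ)
    (hdir : ∀ a b : P, ∃ c, G.le a c ∧ G.le b c)
    (I : Set P) (hI : G.IsNormalRieszIdeal I) (hγI : ∀ a : P, a ∈ I ↔ γ a ∈ I)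
    (U : PEA (P ⊕ P)) (hop : U.toGPEA.oplus = uop G γ) :
    U.toGPEA.IsNormalRieszIdeal (Sum.inl '' I) := by
  obtain ⟨⟨hideal, hN⟩, hR1, hR2⟩ := hI
  exact ⟨⟨isIdeal_image_inl hop hideal, isNormal_image_inl hop hγI hN⟩,
    r1_image_inl hop hγ hdir hR1, r2_image_inl hop hγ hdir hN hR1 hR2⟩

theorem stmt18 {P : Type*} (G : GPEA P) (γ : P → P) (hγ : G.IsUnitizing γ)
    (hdir : ∀ a b : P, ∃ c, G.le a c ∧ G.le b c)
    (I : Set P) (hI : G.IsNormalRieszIdeal I) (hγI : ∀ a : P, a ∈ I ↔ γ a ∈ I)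
    (U : PEA (P ⊕ P)) (hop : U.toGPEA.oplus = uop G γ)
    (hz : U.toGPEA.zero = Sum.inl G.zero) (ho : U.one = Sum.inr G.zero) :
    U.toGPEA.IsNormalRieszIdeal (Sum.inl '' I) :=
  stmt18_general G γ hγ hdir I hI hγI U hop
end

section
/- Let P be a GPEA with total orthosummation (a ⊕ b defined for all a, b) and unitizing automorphism γ, and let U be the γ-unitization of P. If P has the Riesz decomposition property RDP, then U has RDP. (RDP: a ⊕ b = c ⊕ d implies there exist e₁₁, e₁₂, e₂₁, e₂₂ with a = e₁₁ ⊕ e₁₂, b = e₂₁ ⊕ e₂₂, c = e₁₁ ⊕ e₂₁, d = e₁₂ ⊕ e₂₂.) -/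
/-!
A total GPEA is a cancellative monoid, `γ` is a multiplicative map, and the sum of the
unitization becomes three equations: `a + b = c`, `a + ηb = ηc` iff `c * a = b`, and
`ηa + b = ηc` iff `γb * c = a`. Two decompositions of a sum in `P` are refined in `P`. A sum
`ηs` has exactly one `η`-summand on each side; when these sit in different positions a
refinement with a zero entry works, and when they sit in the same position the refinement
comes from one of `a * c = c * d` in `P` (such a `d` exists by `GPEA.conj`), whose
off-diagonal entries commute by cancellation; this commutation is exactly what the remaining
`η`-entry needs.
-/

open scoped Classical

def RieszDecomposition (M : Type*) [Mul M] : Prop :=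
  ∀ a b c d : M, a * b = c * d → ∃ e₁₁ e₁₂ e₂₁ e₂₂ : M,
    e₁₁ * e₁₂ = a ∧ e₂₁ * e₂₂ = b ∧ e₁₁ * e₂₁ = c ∧ e₁₂ * e₂₂ = d

theorem RieszDecomposition.exists_commute {M : Type*} [Semigroup M] [IsCancelMul M]
    (hR : RieszDecomposition M) {a c d : M} (h : a * c = c * d) :
    ∃ e₁₁ e₁₂ e₂₁ e₂₂ : M, e₁₁ * e₁₂ = a ∧ e₂₁ * e₂₂ = c ∧ e₁₁ * e₂₁ = c ∧
      e₁₂ * e₂₂ = d ∧ Commute e₁₂ e₂₁ := by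
  obtain ⟨e₁₁, e₁₂, e₂₁, e₂₂, h₁, h₂, h₃, h₄⟩ := hR a c c d h
  refine ⟨e₁₁, e₁₂, e₂₁, e₂₂, h₁, h₂, h₃, h₄,
    mul_right_cancel (b := e₂₂) (mul_left_cancel (a := e₁₁) ?_)⟩
  calc e₁₁ * (e₁₂ * e₂₁ * e₂₂) = e₁₁ * e₁₂ * (e₂₁ * e₂₂) := by simp only [mul_assoc]
    _ = e₁₁ * e₂₁ * (e₁₂ * e₂₂) := by rw [h₁, h₂, h, h₃, h₄]
    _ = e₁₁ * (e₂₁ * e₁₂ * e₂₂) := by simp only [mul_assoc]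

/-- The sum of the `γ`-unitization of a GPEA with total sum, written multiplicatively:
`inr b` stands for `ηb` (see `GPEA.uop_eq_some_iff`). -/
inductive UnitizationSum {M : Type*} [Mul M] (γ : M → M) : M ⊕ M → M ⊕ M → M ⊕ M → Prop
  | inl_inl {a b c : M} : a * b = c → UnitizationSum γ (.inl a) (.inl b) (.inl c)
  | inl_inr {a b c : M} : c * a = b → UnitizationSum γ (.inl a) (.inr b) (.inr c)
  | inr_inl {a b c : M} : γ b * c = a → UnitizationSum γ (.inr a) (.inl b) (.inr c)

namespace UnitizationSum

variable {M : Type*} [CancelMonoid M]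

theorem riesz (hR : RieszDecomposition M) (hconjL : ∀ a b : M, ∃ c, a * b = c * a)
    (hconjR : ∀ a b : M, ∃ c, a * b = b * c) (γ : M →ₙ* M) {a b c d s : M ⊕ M}
    (hab : UnitizationSum γ a b s) (hcd : UnitizationSum γ c d s) :
    ∃ e₁₁ e₁₂ e₂₁ e₂₂, UnitizationSum γ e₁₁ e₁₂ a ∧ UnitizationSum γ e₂₁ e₂₂ b ∧
      UnitizationSum γ e₁₁ e₂₁ c ∧ UnitizationSum γ e₁₂ e₂₂ d := by
  cases hab with
  | @inl_inl a b _ hab =>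
    cases hcd with
    | @inl_inl c d _ hcd =>
      obtain ⟨e₁₁, e₁₂, e₂₁, e₂₂, h₁, h₂, h₃, h₄⟩ := hR a b c d (hab.trans hcd.symm)
      exact ⟨.inl e₁₁, .inl e₁₂, .inl e₂₁, .inl e₂₂, .inl_inl h₁, .inl_inl h₂, .inl_inl h₃,
        .inl_inl h₄⟩
  | @inl_inr a _ s hab =>
    subst hab
    cases hcd with
    | @inl_inr c _ _ hcd =>
      subst hcd
      obtain ⟨d, hd⟩ := hconjR a c
      obtain ⟨e₁₁, e₁₂, e₂₁, -, h₁, -, h₃, -, hcomm⟩ := hR.exists_commute hd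
      refine ⟨.inl e₁₁, .inl e₁₂, .inl e₂₁, .inr (s * a * e₂₁), .inl_inl h₁, .inl_inr rfl,
        .inl_inl h₃, .inl_inr ?_⟩
      rw [← h₁, ← h₃]
      simp only [mul_assoc, hcomm.eq]
    | @inr_inl _ d _ hcd =>
      subst hcd
      exact ⟨.inl a, .inl 1, .inr (γ d * s * a), .inl d, .inl_inl (mul_one a),
        .inr_inl (mul_assoc _ _ _).symm, .inl_inr rfl, .inl_inl (one_mul d)⟩
  | @inr_inl _ b s hab =>
    subst hab
    cases hcd with
    | @inl_inr c _ _ hcd =>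
      subst hcd
      exact ⟨.inl c, .inr (γ b * s * c), .inl 1, .inl b, .inl_inr rfl, .inl_inl (one_mul b),
        .inl_inl (mul_one c), .inr_inl (mul_assoc _ _ _).symm⟩
    | @inr_inl _ d _ hcd =>
      subst hcd
      obtain ⟨x, hx⟩ := hconjL d b
      obtain ⟨-, e₁₂, e₂₁, e₂₂, -, h₂, -, h₄, hcomm⟩ := hR.exists_commute hx.symm
      refine ⟨.inr (γ e₂₁ * (γ b * s)), .inl e₂₁, .inl e₁₂, .inl e₂₂, .inr_inl rfl, .inl_inl h₄,
        .inr_inl ?_, .inl_inl h₂⟩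
      rw [← mul_assoc, ← mul_assoc, ← map_mul, ← map_mul, ← h₂, ← h₄, hcomm.left_comm]

end UnitizationSum

namespace GPEA

variable {P : Type*} (G : GPEA P) (htot : ∀ a b : P, ∃ s, G.oplus a b = some s)

noncomputable abbrev mulOfTotal : Mul P :=
  ⟨fun a b => (htot a b).choose⟩

theorem oplus_eq_some_iff {a b s : P} :
    letI := G.mulOfTotal htot
    G.oplus a b = some s ↔ a * b = s :=
  ⟨fun h => Option.some.inj ((htot a b).choose_spec.symm.trans h),
    fun h => h ▸ (htot a b).choose_spec⟩

theorem oplus_eq_some_mul (a b : P) :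
    letI := G.mulOfTotal htot
    G.oplus a b = some (a * b) :=
  (htot a b).choose_spec

noncomputable abbrev cancelMonoidOfTotal : CancelMonoid P :=
  letI := G.mulOfTotal htot
  { mul_assoc a b c := by
      obtain ⟨bc, hbc, h⟩ := G.assoc₁ (G.oplus_eq_some_mul htot a b)
        (G.oplus_eq_some_mul htot (a * b) c)
      rw [G.oplus_eq_some_iff htot] at hbc h
      rw [← h, ← hbc]
    one := G.zero
    one_mul a := (G.oplus_eq_some_iff htot).1 (G.zero_oplus a)
    mul_one a := (G.oplus_eq_some_iff htot).1 (G.oplus_zero a)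
    mul_left_cancel a b c h :=
      G.cancel_left (G.oplus_eq_some_mul htot a b) ((G.oplus_eq_some_iff htot).2 h.symm)
    mul_right_cancel a b c h :=
      G.cancel_right (G.oplus_eq_some_mul htot b a) ((G.oplus_eq_some_iff htot).2 h.symm) }

variable {G} in
theorem RDP.rieszDecomposition (hR : G.RDP) :
    letI := G.cancelMonoidOfTotal htot
    RieszDecomposition P := by
  intro a b c d h
  simpa only [G.oplus_eq_some_iff htot] using
    hR a b c d _ (G.oplus_eq_some_mul htot a b) ((G.oplus_eq_some_iff htot).2 h.symm)

theorem exists_mul_eq_mul_left :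
    letI := G.cancelMonoidOfTotal htot
    ∀ a b : P, ∃ c, a * b = c * a := fun a b =>
  (G.conj (G.oplus_eq_some_mul htot a b)).1.imp fun _ h => ((G.oplus_eq_some_iff htot).1 h).symm

theorem exists_mul_eq_mul_right :
    letI := G.cancelMonoidOfTotal htot
    ∀ a b : P, ∃ c, a * b = b * c := fun a b =>
  (G.conj (G.oplus_eq_some_mul htot a b)).2.imp fun _ h => ((G.oplus_eq_some_iff htot).1 h).symm

variable {G} in
def IsMorphism.toMulHom {γ : P → P} (hγ : G.IsMorphism G γ) :
    letI := G.cancelMonoidOfTotal htot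
    P →ₙ* P :=
  letI := G.cancelMonoidOfTotal htot
  { toFun := γ
    map_mul' a b := ((G.oplus_eq_some_iff htot).1 (hγ a b _ (G.oplus_eq_some_mul htot a b))).symm }

theorem uop_inl_inr_eq_some_iff (γ : P → P) (a b c : P) :
    letI := G.cancelMonoidOfTotal htot
    uop G γ (.inl a) (.inr b) = some (.inr c) ↔ c * a = b := by
  let := G.cancelMonoidOfTotal htot
  simp only [uop, leL, G.oplus_eq_some_iff htot]
  split_ifs with h
  · simp only [Option.some.injEq, Sum.inr.injEq]
    exact ⟨fun hc => hc ▸ h.choose_spec, fun hc => mul_right_cancel (h.choose_spec.trans hc.symm)⟩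
  · simpa using fun hc => h ⟨c, hc⟩

theorem uop_inr_inl_eq_some_iff (γ : P → P) (a b c : P) :
    letI := G.cancelMonoidOfTotal htot
    uop G γ (.inr a) (.inl b) = some (.inr c) ↔ γ b * c = a := by
  let := G.cancelMonoidOfTotal htot
  simp only [uop, le, G.oplus_eq_some_iff htot]
  split_ifs with h
  · simp only [Option.some.injEq, Sum.inr.injEq]
    exact ⟨fun hc => hc ▸ h.choose_spec, fun hc => mul_left_cancel (h.choose_spec.trans hc.symm)⟩
  · simpa using fun hc => h ⟨c, hc⟩

theorem uop_eq_some_iff (γ : P → P) (x y z : P ⊕ P) :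
    letI := G.cancelMonoidOfTotal htot
    uop G γ x y = some z ↔ UnitizationSum γ x y z := by
  let := G.cancelMonoidOfTotal htot
  constructor
  · intro h
    rcases x with a | a <;> rcases y with b | b
    · simp only [uop, G.oplus_eq_some_mul htot, Option.map_some, Option.some.injEq] at h
      exact h ▸ .inl_inl rfl
    · simp only [uop, leL, G.oplus_eq_some_iff htot] at h
      split_ifs at h with hle
      cases h
      exact .inl_inr hle.choose_spec
    · simp only [uop, le, G.oplus_eq_some_iff htot] at h
      split_ifs at h with hle
      cases h
      exact .inr_inl hle.choose_spec
    · cases h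
  · rintro (@⟨a, b, c, rfl⟩ | @⟨a, b, c, h⟩ | @⟨a, b, c, h⟩)
    · simp only [uop, G.oplus_eq_some_mul htot, Option.map_some]
    · exact (G.uop_inl_inr_eq_some_iff htot γ a b c).2 h
    · exact (G.uop_inr_inl_eq_some_iff htot γ a b c).2 h

end GPEA

theorem stmt19_general {P : Type*} (G : GPEA P)
    (htot : ∀ a b : P, ∃ s, G.oplus a b = some s)
    (γ : P → P) (hγ : G.IsUnitizing γ)
    (U : PEA (P ⊕ P)) (hop : U.toGPEA.oplus = uop G γ)
    (hRDP : G.RDP) : U.toGPEA.RDP := by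
  let := G.cancelMonoidOfTotal htot
  intro a b c d s hab hcd
  simp only [hop, G.uop_eq_some_iff htot] at hab hcd ⊢
  exact UnitizationSum.riesz (hRDP.rieszDecomposition htot) (G.exists_mul_eq_mul_left htot)
    (G.exists_mul_eq_mul_right htot) (hγ.2.1.toMulHom htot) hab hcd

theorem stmt19 {P : Type*} (G : GPEA P)
    (htot : ∀ a b : P, ∃ s, G.oplus a b = some s)
    (γ : P → P) (hγ : G.IsUnitizing γ)
    (U : PEA (P ⊕ P)) (hop : U.toGPEA.oplus = uop G γ)
    (hz : U.toGPEA.zero = Sum.inl G.zero) (ho : U.one = Sum.inr G.zero)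
    (hRDP : G.RDP) : U.toGPEA.RDP :=
  stmt19_general G htot γ hγ U hop hRDP
end
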